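/- arXiv:1911.00771 — 7 statements merged into one kernel-verified Lean document; each statement's English description precedes it below -/
import Mathlib

section
/- Let Z and Z̃ be jointly Gaussian random variables, each with mean 0 and variance 1, with correlation coefficient ρ. Then for any λ with 0 ≤ λ² (1 - ρ²) < 1, E[exp(-λ(Z² - Z̃²)/2)] = (1 - λ²(1-ρ²))^{-1/2}. -/
open MeasureTheory ProbabilityTheory Real
open scoped ENNReal NNReal

lemma cexp_eq_ofReal (b c : ℝ) : (fun x : ℝ => Complex.exp ((b:ℂ) * x ^ 2 + (c:ℂ) * x + 0))
    = fun x : ℝ => ((Real.exp (b * x ^ 2 + c * x) : ℝ) : ℂ) := by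
  funext x
  rw [show ((b:ℂ) * x ^ 2 + (c:ℂ) * x + 0) = ((b * x ^ 2 + c * x : ℝ) : ℂ) by push_cast; ring,
    Complex.ofReal_exp]

lemma integral_exp_quadratic_real {b : ℝ} (hb : b < 0) (c : ℝ) :
    ∫ x : ℝ, Real.exp (b * x ^ 2 + c * x)
      = (π / (-b)) ^ (1/2 : ℝ) * Real.exp (-c ^ 2 / (4 * b)) := by
  have hb' : (b : ℂ).re < 0 := by simpa using hb
  have hπ : (0:ℝ) ≤ π / (-b) := le_of_lt (div_pos pi_pos (neg_pos.mpr hb))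
  have key : ((∫ x : ℝ, Real.exp (b * x ^ 2 + c * x) : ℝ) : ℂ)
      = (((π / (-b)) ^ (1/2 : ℝ) * Real.exp (-c ^ 2 / (4 * b)) : ℝ) : ℂ) := by
    calc ((∫ x : ℝ, Real.exp (b * x ^ 2 + c * x) : ℝ) : ℂ)
        = ∫ x : ℝ, ((Real.exp (b * x ^ 2 + c * x) : ℝ) : ℂ) := integral_ofReal.symm
      _ = ∫ x : ℝ, Complex.exp ((b:ℂ) * x ^ 2 + (c:ℂ) * x + 0) := by rw [cexp_eq_ofReal]
      _ = ((π:ℂ) / -(b:ℂ)) ^ (1/2 : ℂ) * Complex.exp (0 - (c:ℂ)^2 / (4*(b:ℂ))) :=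
          integral_cexp_quadratic hb' c 0
      _ = (((π / (-b)) ^ (1/2 : ℝ) * Real.exp (-c ^ 2 / (4 * b)) : ℝ) : ℂ) := by
          rw [show ((π:ℂ) / -(b:ℂ)) = ((π / (-b) : ℝ) : ℂ) by push_cast; ring,
            show (1/2 : ℂ) = ((1/2 : ℝ) : ℂ) by norm_num, ← Complex.ofReal_cpow hπ,
            show ((0:ℂ) - (c:ℂ)^2/(4*(b:ℂ))) = ((-c^2/(4*b) : ℝ) : ℂ) by push_cast; ring,
            ← Complex.ofReal_exp, ← Complex.ofReal_mul]
  exact_mod_cast key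

lemma integrable_exp_quadratic_real {b : ℝ} (hb : b < 0) (c : ℝ) :
    Integrable (fun x : ℝ => Real.exp (b * x ^ 2 + c * x)) := by
  have hb' : (b : ℂ).re < 0 := by simpa using hb
  have h := (integrable_cexp_quadratic' hb' (c : ℂ) 0).norm
  refine h.congr (ae_of_all _ fun x => ?_)
  show ‖Complex.exp ((b:ℂ) * x ^ 2 + (c:ℂ) * x + 0)‖ = Real.exp (b * x ^ 2 + c * x)
  rw [congrFun (cexp_eq_ofReal b c) x, Complex.norm_real, Real.norm_eq_abs,
    abs_of_pos (Real.exp_pos _)]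

lemma gaussian_density_mul (t u : ℝ) (x : ℝ) :
    gaussianPDFReal 0 1 x * Real.exp (t * x ^ 2 + u * x)
      = (Real.sqrt (2 * π))⁻¹ * Real.exp ((t - 1/2) * x ^ 2 + u * x) := by
  unfold gaussianPDFReal
  rw [NNReal.coe_one, mul_one, mul_one, mul_assoc, ← Real.exp_add]
  congr 2
  ring

lemma integral_exp_sq_gaussian {t : ℝ} (ht : t < 1/2) (u : ℝ) :
    ∫ x, Real.exp (t * x ^ 2 + u * x) ∂(gaussianReal 0 1)
      = (1 - 2*t) ^ (-(1/2) : ℝ) * Real.exp (u ^ 2 / (2 * (1 - 2*t))) := by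
  have hpos : (0:ℝ) < 1 - 2*t := by linarith
  rw [gaussianReal_of_var_ne_zero 0 one_ne_zero]
  have hpdf : gaussianPDF 0 1 = fun x => ((Real.toNNReal (gaussianPDFReal 0 1 x) : ℝ≥0) : ℝ≥0∞) := rfl
  rw [hpdf, integral_withDensity_eq_integral_smul ((measurable_gaussianPDFReal 0 1).real_toNNReal)]
  have heq : ∀ x : ℝ, (Real.toNNReal (gaussianPDFReal 0 1 x) : ℝ≥0) • Real.exp (t * x ^ 2 + u * x)
      = (Real.sqrt (2 * π))⁻¹ * Real.exp ((t - 1/2) * x ^ 2 + u * x) := by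
    intro x
    rw [NNReal.smul_def, smul_eq_mul, Real.coe_toNNReal _ (gaussianPDFReal_nonneg 0 1 x),
      gaussian_density_mul]
  simp_rw [heq]
  rw [integral_const_mul, integral_exp_quadratic_real (by linarith : t - 1/2 < 0) u]
  have hne0 : (1:ℝ) - 2*t ≠ 0 := ne_of_gt hpos
  have hne1 : t - 1/2 ≠ 0 := ne_of_lt (by linarith)
  have h1 : π / (-(t - 1/2)) = (2*π) * (1 - 2*t)⁻¹ := by
    rw [div_eq_iff (ne_of_gt (by linarith : (0:ℝ) < -(t - 1/2)))]
    field_simp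
    ring
  rw [h1, Real.mul_rpow (by positivity) (by positivity)]
  rw [show Real.sqrt (2*π) = (2*π) ^ (1/2 : ℝ) from Real.sqrt_eq_rpow _]
  rw [Real.inv_rpow hpos.le, ← Real.rpow_neg hpos.le]
  have h2 : Real.exp (-u ^ 2 / (4 * (t - 1/2))) = Real.exp (u ^ 2 / (2 * (1 - 2*t))) := by
    congr 1
    rw [div_eq_div_iff (ne_of_lt (by linarith : 4 * (t - 1/2) < 0)) (ne_of_gt (by linarith : (0:ℝ) < 2 * (1 - 2*t)))]
    ring
  rw [h2]
  have hne : (2*π) ^ (1/2 : ℝ) ≠ 0 := by positivity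
  field_simp

lemma integrable_exp_sq_gaussian {t : ℝ} (ht : t < 1/2) (u : ℝ) :
    Integrable (fun x => Real.exp (t * x ^ 2 + u * x)) (gaussianReal 0 1) := by
  rw [gaussianReal_of_var_ne_zero 0 one_ne_zero]
  rw [integrable_withDensity_iff (measurable_gaussianPDF 0 1)
      (ae_of_all _ fun x => ENNReal.ofReal_lt_top)]
  have heq : ∀ x : ℝ, Real.exp (t * x ^ 2 + u * x) * (gaussianPDF 0 1 x).toReal
      = (Real.sqrt (2 * π))⁻¹ * Real.exp ((t - 1/2) * x ^ 2 + u * x) := by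
    intro x
    rw [gaussianPDF, ENNReal.toReal_ofReal (gaussianPDFReal_nonneg 0 1 x), mul_comm,
      gaussian_density_mul]
  refine (((integrable_exp_quadratic_real (by linarith : t - 1/2 < 0) u).const_mul
    (Real.sqrt (2 * π))⁻¹).congr (ae_of_all _ fun x => ?_))
  exact (heq x).symm

lemma double_gaussian (P Q R : ℝ) (hR : R < 1/2) (hP2 : P + Q^2/(2*(1-2*R)) < 1/2)
    (c : ℝ) (hc : 0 < c) (ha' : P + |Q| *c/2 < 1/2) (hb' : R + |Q| /(2*c) < 1/2) :
    ∫ z : ℝ × ℝ, Real.exp (P*z.1^2 + Q*(z.1*z.2) + R*z.2^2)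
        ∂((gaussianReal 0 1).prod (gaussianReal 0 1))
      = (1-2*R) ^ (-(1/2) : ℝ) * (1 - 2*(P + Q^2/(2*(1-2*R)))) ^ (-(1/2) : ℝ) := by
  have hBpos : (0:ℝ) < 1 - 2*R := by linarith
  have hmeas : AEStronglyMeasurable (fun z : ℝ × ℝ => Real.exp (P*z.1^2 + Q*(z.1*z.2) + R*z.2^2))
      ((gaussianReal 0 1).prod (gaussianReal 0 1)) :=
    Continuous.aestronglyMeasurable (by fun_prop)
  have hbound : ∀ z : ℝ × ℝ, ‖Real.exp (P*z.1^2 + Q*(z.1*z.2) + R*z.2^2)‖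
      ≤ Real.exp ((P + |Q| *c/2) * z.1^2 + 0*z.1) * Real.exp ((R + |Q| /(2*c)) * z.2^2 + 0*z.2) := by
    intro z
    rw [Real.norm_eq_abs, abs_of_pos (Real.exp_pos _), ← Real.exp_add]
    apply Real.exp_le_exp.mpr
    have h3 : Q * (z.1*z.2) ≤ |Q| * |z.1| * |z.2| := by
      calc Q * (z.1*z.2) ≤ |Q * (z.1*z.2)| := le_abs_self _
        _ = |Q| * |z.1| * |z.2| := by rw [abs_mul, abs_mul, mul_assoc]
    have h4 : |Q| * |z.1| * |z.2| ≤ |Q| *c/2*z.1^2 + |Q| /(2*c)*z.2^2 := by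
      have key : 2*c*(|z.1| * |z.2|) ≤ c^2*z.1^2 + z.2^2 := by
        nlinarith [sq_nonneg (c*|z.1| - |z.2|), sq_abs z.1, sq_abs z.2]
      have h7 : |Q| /(2*c) * (2*c*(|z.1| * |z.2|)) ≤ |Q| /(2*c) * (c^2*z.1^2 + z.2^2) :=
        mul_le_mul_of_nonneg_left key (by positivity)
      have e2 : |Q| /(2*c) * (2*c*(|z.1| * |z.2|)) = |Q| * |z.1| * |z.2| := by
        field_simp
      have e3 : |Q| /(2*c) * (c^2*z.1^2 + z.2^2) = |Q| *c/2*z.1^2 + |Q| /(2*c)*z.2^2 := by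
        field_simp
      rw [e2, e3] at h7
      exact h7
    nlinarith [h3, h4]
  have hint : Integrable (fun z : ℝ × ℝ => Real.exp (P*z.1^2 + Q*(z.1*z.2) + R*z.2^2))
      ((gaussianReal 0 1).prod (gaussianReal 0 1)) := by
    refine Integrable.mono' ((integrable_exp_sq_gaussian ha' 0).mul_prod
      (integrable_exp_sq_gaussian hb' 0)) hmeas (ae_of_all _ hbound)
  have step : ∀ x : ℝ, (∫ y, Real.exp (P*x^2 + Q*(x*y) + R*y^2) ∂(gaussianReal 0 1))
      = (1-2*R) ^ (-(1/2) : ℝ) * Real.exp ((P + Q^2/(2*(1-2*R)))*x^2 + 0*x) := by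
    intro x
    have e1 : (fun y : ℝ => Real.exp (P*x^2 + Q*(x*y) + R*y^2))
        = fun y => Real.exp (R*y^2 + (Q*x)*y) * Real.exp (P*x^2) := by
      funext y; rw [← Real.exp_add]; congr 1; ring
    rw [e1, integral_mul_const, integral_exp_sq_gaussian hR (Q*x), mul_assoc, ← Real.exp_add]
    congr 1
    field_simp [hBpos.ne']
    ring
  calc ∫ z : ℝ × ℝ, Real.exp (P*z.1^2 + Q*(z.1*z.2) + R*z.2^2)
        ∂((gaussianReal 0 1).prod (gaussianReal 0 1))
      = ∫ x, (∫ y, Real.exp (P*x^2 + Q*(x*y) + R*y^2) ∂(gaussianReal 0 1)) ∂(gaussianReal 0 1) :=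
        integral_prod _ hint
    _ = ∫ x, (1-2*R) ^ (-(1/2) : ℝ) * Real.exp ((P + Q^2/(2*(1-2*R)))*x^2 + 0*x)
          ∂(gaussianReal 0 1) := integral_congr_ae (ae_of_all _ step)
    _ = (1-2*R) ^ (-(1/2) : ℝ)
          * ∫ x, Real.exp ((P + Q^2/(2*(1-2*R)))*x^2 + 0*x) ∂(gaussianReal 0 1) :=
        integral_const_mul _ _
    _ = (1-2*R) ^ (-(1/2) : ℝ) * ((1 - 2*(P + Q^2/(2*(1-2*R)))) ^ (-(1/2) : ℝ)
          * Real.exp (0^2 / (2*(1 - 2*(P + Q^2/(2*(1-2*R))))))) := by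
        rw [integral_exp_sq_gaussian hP2 0]
    _ = (1-2*R) ^ (-(1/2) : ℝ) * (1 - 2*(P + Q^2/(2*(1-2*R)))) ^ (-(1/2) : ℝ) := by
        norm_num

theorem mgf_diff_squares_bivariate_gaussian
    {Ω : Type*} [MeasureSpace Ω] [IsProbabilityMeasure (ℙ : Measure Ω)]
    (Z W : Ω → ℝ) (ρ : ℝ) (hρ : -1 ≤ ρ) (hρ' : ρ ≤ 1)
    (hZ : Measure.map Z ℙ = gaussianReal 0 1)
    (hW : Measure.map W ℙ = gaussianReal 0 1)
    (hind : IndepFun Z W ℙ)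
    (Zt : Ω → ℝ) (hZt : ∀ ω, Zt ω = ρ * Z ω + Real.sqrt (1 - ρ ^ 2) * W ω)
    (lam : ℝ) (hlam0 : 0 ≤ lam ^ 2 * (1 - ρ ^ 2))
    (hlam1 : lam ^ 2 * (1 - ρ ^ 2) < 1) :
    ∫ ω, Real.exp (-(lam * (Z ω ^ 2 - Zt ω ^ 2) / 2)) ∂ℙ
      = (1 - lam ^ 2 * (1 - ρ ^ 2)) ^ (-(1 / 2 : ℝ)) := by
  have hs2 : (0:ℝ) ≤ 1 - ρ^2 := by nlinarith
  set s := Real.sqrt (1 - ρ^2) with hsdef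
  have hs : s^2 = 1 - ρ^2 := Real.sq_sqrt hs2
  have hA : (0:ℝ) < 1 + lam*(1-ρ^2) := by
    nlinarith [sq_nonneg (1 + lam*(1-ρ^2)), mul_nonneg hlam0 (sq_nonneg ρ), hlam1]
  have hB : (0:ℝ) < 1 - lam*(1-ρ^2) := by
    nlinarith [sq_nonneg (1 - lam*(1-ρ^2)), mul_nonneg hlam0 (sq_nonneg ρ), hlam1]
  have hq2 : (lam*ρ*s)^2 = lam^2*ρ^2*(1-ρ^2) := by rw [mul_pow, mul_pow, hs]
  have hdet : (lam*ρ*s)^2 < (1 + lam*(1-ρ^2)) * (1 - lam*(1-ρ^2)) := by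
    rw [hq2]; nlinarith [hlam1]
  -- abbreviations for coefficients (as plain terms)
  have hR : lam*(1-ρ^2)/2 < 1/2 := by linarith
  have hBeq : (1:ℝ) - 2*(lam*(1-ρ^2)/2) = 1 - lam*(1-ρ^2) := by ring
  have hP2 : -(lam*(1-ρ^2))/2 + (lam*ρ*s)^2/(2*(1-2*(lam*(1-ρ^2)/2))) < 1/2 := by
    rw [hBeq]
    have h7 : (lam*ρ*s)^2/(2*(1-lam*(1-ρ^2))) < (1+lam*(1-ρ^2))/2 := by
      rw [div_lt_div_iff₀ (by linarith) (by norm_num)]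
      nlinarith [hdet]
    linarith
  -- the constant c
  set c := Real.sqrt ((1 + lam*(1-ρ^2))/(1 - lam*(1-ρ^2))) with hcdef
  have hcpos : 0 < c := Real.sqrt_pos.mpr (div_pos hA hB)
  have hc2 : c^2 = (1 + lam*(1-ρ^2))/(1 - lam*(1-ρ^2)) := Real.sq_sqrt (le_of_lt (div_pos hA hB))
  have hQc : |lam*ρ*s| * c < 1 + lam*(1-ρ^2) := by
    have h2 : (|lam*ρ*s| * c)^2 < (1 + lam*(1-ρ^2))^2 := by
      rw [mul_pow, sq_abs, hc2]
      calc (lam*ρ*s)^2 * ((1 + lam*(1-ρ^2))/(1 - lam*(1-ρ^2)))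
          < ((1 + lam*(1-ρ^2)) * (1 - lam*(1-ρ^2))) * ((1 + lam*(1-ρ^2))/(1 - lam*(1-ρ^2))) :=
            mul_lt_mul_of_pos_right hdet (div_pos hA hB)
        _ = (1 + lam*(1-ρ^2))^2 := by field_simp
    exact lt_of_pow_lt_pow_left₀ 2 hA.le h2
  have hQc' : |lam*ρ*s| / c < 1 - lam*(1-ρ^2) := by
    have h2 : (|lam*ρ*s| / c)^2 < (1 - lam*(1-ρ^2))^2 := by
      rw [div_pow, sq_abs, hc2, div_div_eq_mul_div]
      calc (lam*ρ*s)^2 * (1 - lam*(1-ρ^2)) / (1 + lam*(1-ρ^2))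
          < ((1 + lam*(1-ρ^2)) * (1 - lam*(1-ρ^2))) * (1 - lam*(1-ρ^2)) / (1 + lam*(1-ρ^2)) := by
            gcongr
        _ = (1 - lam*(1-ρ^2))^2 := by field_simp
    exact lt_of_pow_lt_pow_left₀ 2 hB.le h2
  have ha' : -(lam*(1-ρ^2))/2 + |lam*ρ*s| * c/2 < 1/2 := by linarith
  have hb' : lam*(1-ρ^2)/2 + |lam*ρ*s| / (2*c) < 1/2 := by
    rw [show |lam*ρ*s| / (2*c) = (|lam*ρ*s| / c)/2 from by ring]
    linarith
  -- measurability of Z and W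
  have hZm : AEMeasurable Z ℙ := by
    by_contra h
    rw [Measure.map_of_not_aemeasurable h] at hZ
    have := congrArg (fun m : Measure ℝ => m Set.univ) hZ
    simp [measure_univ] at this
  have hWm : AEMeasurable W ℙ := by
    by_contra h
    rw [Measure.map_of_not_aemeasurable h] at hW
    have := congrArg (fun m : Measure ℝ => m Set.univ) hW
    simp [measure_univ] at this
  have hmap : Measure.map (fun ω => (Z ω, W ω)) ℙ
      = (gaussianReal 0 1).prod (gaussianReal 0 1) := by
    have h := (indepFun_iff_map_prod_eq_prod_map_map hZm hWm).mp hind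
    rwa [hZ, hW] at h
  have hgc : Continuous (fun z : ℝ × ℝ =>
      Real.exp (-(lam*(1-ρ^2))/2*z.1^2 + lam*ρ*s*(z.1*z.2) + lam*(1-ρ^2)/2*z.2^2)) := by
    fun_prop
  have h1 : ∀ ω, Real.exp (-(lam * (Z ω ^ 2 - Zt ω ^ 2) / 2))
      = Real.exp (-(lam*(1-ρ^2))/2*(Z ω)^2 + lam*ρ*s*((Z ω)*(W ω)) + lam*(1-ρ^2)/2*(W ω)^2) := by
    intro ω
    congr 1
    rw [hZt ω]
    linear_combination (lam/2 * W ω^2) * hs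
  calc ∫ ω, Real.exp (-(lam * (Z ω ^ 2 - Zt ω ^ 2) / 2)) ∂ℙ
      = ∫ ω, Real.exp (-(lam*(1-ρ^2))/2*(Z ω)^2 + lam*ρ*s*((Z ω)*(W ω)) + lam*(1-ρ^2)/2*(W ω)^2) ∂ℙ :=
        integral_congr_ae (ae_of_all _ h1)
    _ = ∫ z : ℝ × ℝ, Real.exp (-(lam*(1-ρ^2))/2*z.1^2 + lam*ρ*s*(z.1*z.2) + lam*(1-ρ^2)/2*z.2^2)
          ∂((gaussianReal 0 1).prod (gaussianReal 0 1)) := by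
        rw [← hmap]
        exact (integral_map (hZm.prodMk hWm) hgc.aestronglyMeasurable).symm
    _ = (1-2*(lam*(1-ρ^2)/2)) ^ (-(1/2) : ℝ)
          * (1 - 2*(-(lam*(1-ρ^2))/2 + (lam*ρ*s)^2/(2*(1-2*(lam*(1-ρ^2)/2))))) ^ (-(1/2) : ℝ) :=
        double_gaussian _ _ _ hR hP2 c hcpos ha' hb'
    _ = (1 - lam ^ 2 * (1 - ρ ^ 2)) ^ (-(1 / 2 : ℝ)) := by
        have hD : (0:ℝ) < 1 - 2*(-(lam*(1-ρ^2))/2 + (lam*ρ*s)^2/(2*(1-2*(lam*(1-ρ^2)/2)))) := by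
          linarith [hP2]
        rw [← Real.mul_rpow (by linarith [hR] : (0:ℝ) ≤ 1-2*(lam*(1-ρ^2)/2)) hD.le]
        congr 1
        rw [hq2]
        field_simp
        ring
end

section
/- Let Z and Z̃ be jointly Gaussian random variables, each with mean 0 and variance 1, with correlation coefficient ρ. Then for any Δ > 0, P((Z² - Z̃²)/2 > Δ) ≤ exp(-D(Δ, 1-ρ²)), where D(Δ, 1-ρ²) = max over λ ≥ 0 with λ²(1-ρ²) < 1 of [λΔ + (1/2)log(1 - λ²(1-ρ²))]. -/
open MeasureTheory Real ProbabilityTheory ENNReal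

lemma integrable_exp_quad (b c d : ℝ) (hb : 0 < b) :
    Integrable (fun x : ℝ => exp (-b * x ^ 2 + c * x + d)) := by
  have key : ∀ x : ℝ, -b * x ^ 2 + c * x + d
      = -b * (x - c / (2 * b)) ^ 2 + (c ^ 2 / (4 * b) + d) := by
    intro x; field_simp; ring
  simp_rw [key, Real.exp_add]
  exact ((integrable_exp_neg_mul_sq hb).comp_sub_right (c / (2 * b))).mul_const _

lemma integral_exp_quad (b c d : ℝ) (hb : 0 < b) :
    ∫ x : ℝ, exp (-b * x ^ 2 + c * x + d) = exp (c ^ 2 / (4 * b) + d) * Real.sqrt (π / b) := by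
  have key : ∀ x : ℝ, -b * x ^ 2 + c * x + d
      = -b * (x - c / (2 * b)) ^ 2 + (c ^ 2 / (4 * b) + d) := by
    intro x; field_simp; ring
  simp_rw [key, Real.exp_add, integral_mul_const]
  rw [integral_sub_right_eq_self (fun x => exp (-b * x ^ 2)) (c / (2 * b)), integral_gaussian]
  ring

lemma lintegral_gaussianReal_exp_quad (a b c d : ℝ) (hb : 0 < b) (hab : a + b = 1/2) :
    ∫⁻ x : ℝ, ENNReal.ofReal (exp (a * x ^ 2 + c * x + d)) ∂(gaussianReal 0 1)
      = ENNReal.ofReal ((Real.sqrt (2 * π))⁻¹ * (exp (c ^ 2 / (4 * b) + d) * Real.sqrt (π / b))) := by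
  have ha : a = 1/2 - b := by linarith
  subst ha
  rw [gaussianReal_of_var_ne_zero 0 one_ne_zero,
    lintegral_withDensity_eq_lintegral_mul _ (measurable_gaussianPDF 0 1)
      (by fun_prop : Measurable fun x : ℝ => ENNReal.ofReal (exp ((1/2 - b) * x ^ 2 + c * x + d)))]
  have key : ∀ x : ℝ, (gaussianPDF 0 1 x) * ENNReal.ofReal (exp ((1/2 - b) * x ^ 2 + c * x + d))
      = ENNReal.ofReal ((Real.sqrt (2 * π))⁻¹ * exp (-b * x ^ 2 + c * x + d)) := by
    intro x
    rw [gaussianPDF, ← ENNReal.ofReal_mul (gaussianPDFReal_nonneg 0 1 x), gaussianPDFReal]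
    congr 1
    push_cast
    rw [mul_one, mul_assoc, ← Real.exp_add]
    ring_nf
  simp only [Pi.mul_apply, key]
  simp_rw [ENNReal.ofReal_mul (p := (Real.sqrt (2 * π))⁻¹) (by positivity)]
  rw [lintegral_const_mul _ (by fun_prop),
    ← ofReal_integral_eq_lintegral_ofReal (integrable_exp_quad b c d hb)
      (Filter.Eventually.of_forall fun x => (Real.exp_pos _).le),
    integral_exp_quad b c d hb, ENNReal.ofReal_mul (by positivity)]

lemma mgf_calc (ρ L : ℝ) (hρ : ρ ∈ Set.Ioo (-1:ℝ) 1) (hL : 0 ≤ L)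
    (hL2 : L ^ 2 * (1 - ρ ^ 2) < 1) :
    ∫⁻ p : ℝ × ℝ, ENNReal.ofReal
        (exp (L * ((p.1 ^ 2 - (ρ * p.1 + Real.sqrt (1 - ρ ^ 2) * p.2) ^ 2) / 2)))
        ∂((gaussianReal 0 1).prod (gaussianReal 0 1))
      = ENNReal.ofReal (exp (-((1/2) * Real.log (1 - L ^ 2 * (1 - ρ ^ 2))))) := by
  obtain ⟨hρ1, hρ2⟩ := hρ
  set s2 : ℝ := 1 - ρ ^ 2 with hs2def
  have hs2 : 0 < s2 := by nlinarith
  set s : ℝ := Real.sqrt s2 with hsdef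
  have hs_sq : s ^ 2 = s2 := Real.sq_sqrt hs2.le
  set b₁ : ℝ := (1 + L * s2) / 2 with hb₁def
  have hb₁ : 0 < b₁ := by positivity
  set b₂ : ℝ := (1 - L ^ 2 * s2) / (2 * (1 + L * s2)) with hb₂def
  have hu : 0 < 1 - L ^ 2 * s2 := by linarith
  have hb₂ : 0 < b₂ := by positivity
  rw [lintegral_prod _ (by fun_prop)]
  have inner : ∀ x : ℝ,
      (∫⁻ y : ℝ, ENNReal.ofReal (exp (L * ((x ^ 2 - (ρ * x + s * y) ^ 2) / 2)))
        ∂(gaussianReal 0 1))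
      = ENNReal.ofReal ((Real.sqrt (2 * π))⁻¹ *
          (exp ((-(L * ρ * s * x)) ^ 2 / (4 * b₁) + L * s2 / 2 * x ^ 2) * Real.sqrt (π / b₁))) := by
    intro x
    have expand : ∀ y : ℝ, L * ((x ^ 2 - (ρ * x + s * y) ^ 2) / 2)
        = (1/2 - b₁) * y ^ 2 + (-(L * ρ * s * x)) * y + L * s2 / 2 * x ^ 2 := by
      intro y
      have h1 : (1:ℝ)/2 - b₁ = -(L * s2) / 2 := by rw [hb₁def]; ring
      rw [h1]
      linear_combination (-(L * y ^ 2) / 2) * hs_sq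
    simp_rw [expand]
    exact lintegral_gaussianReal_exp_quad _ b₁ _ _ hb₁ (by ring)
  have houter : (fun x : ℝ => ∫⁻ y : ℝ,
      ENNReal.ofReal (exp (L * ((x ^ 2 - (ρ * x + s * y) ^ 2) / 2))) ∂(gaussianReal 0 1))
      = fun x : ℝ => ENNReal.ofReal ((Real.sqrt (2 * π))⁻¹ * Real.sqrt (π / b₁)) *
          ENNReal.ofReal (exp ((1/2 - b₂) * x ^ 2 + 0 * x + 0)) := by
    funext x
    rw [inner x, ← ENNReal.ofReal_mul (by positivity)]
    congr 1
    have hcoef : (-(L * ρ * s * x)) ^ 2 / (4 * b₁) + L * s2 / 2 * x ^ 2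
        = (1/2 - b₂) * x ^ 2 + 0 * x + 0 := by
      have hss : (-(L * ρ * s * x)) ^ 2 = L ^ 2 * ρ ^ 2 * s2 * x ^ 2 := by
        have h3 : (-(L * ρ * s * x)) ^ 2 = L ^ 2 * ρ ^ 2 * s ^ 2 * x ^ 2 := by ring
        rw [h3, hs_sq]
      have hρs : ρ ^ 2 = 1 - s2 := by rw [hs2def]; ring
      rw [hss, hρs, hb₂def, hb₁def]
      have h4 : (0:ℝ) < 1 + L * s2 := by positivity
      field_simp
      ring
    rw [hcoef]; ring
  simp only [houter]
  rw [lintegral_const_mul _ (by fun_prop),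
    lintegral_gaussianReal_exp_quad _ b₂ _ _ hb₂ (by ring),
    ← ENNReal.ofReal_mul (by positivity)]
  congr 1
  have hexp0 : ((0:ℝ) ^ 2 / (4 * b₂) + 0) = 0 := by ring
  rw [hexp0, Real.exp_zero, one_mul]
  -- now : (√(2π))⁻¹ * √(π/b₁) * ((√(2π))⁻¹ * √(π/b₂)) = exp (-(1/2 * log (1 - L^2*s2)))
  have hrhs : exp (-((1/2) * Real.log (1 - L ^ 2 * s2))) = (Real.sqrt (1 - L ^ 2 * s2))⁻¹ := by
    rw [show -((1:ℝ)/2 * Real.log (1 - L ^ 2 * s2)) = -(Real.log (1 - L ^ 2 * s2) / 2) by ring,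
      ← Real.log_sqrt hu.le, Real.exp_neg, Real.exp_log (Real.sqrt_pos.mpr hu)]
  rw [hrhs, ← Real.sqrt_inv (2 * π), ← Real.sqrt_mul (by positivity),
    ← Real.sqrt_mul (by positivity), ← Real.sqrt_mul (by positivity),
    ← Real.sqrt_inv (1 - L ^ 2 * s2)]
  congr 1
  rw [hb₁def, hb₂def]
  have hπ := Real.pi_pos
  field_simp

theorem chernoff_diff_squares_bivariate_gaussian
    {Ω : Type*} [MeasureSpace Ω] [IsProbabilityMeasure (ℙ : Measure Ω)]
    (Z W : Ω → ℝ) (ρ : ℝ) (hρ : ρ ∈ Set.Ioo (-1 : ℝ) 1)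
    (hZ : Measure.map Z ℙ = gaussianReal 0 1)
    (hW : Measure.map W ℙ = gaussianReal 0 1)
    (hind : IndepFun Z W ℙ)
    (Zt : Ω → ℝ) (hZt : ∀ ω, Zt ω = ρ * Z ω + Real.sqrt (1 - ρ ^ 2) * W ω)
    (Δ : ℝ) (hΔ : 0 < Δ)
    (D : ℝ)
    (hD : D = sSup {v : ℝ | ∃ lam : ℝ, 0 ≤ lam ∧ lam ^ 2 * (1 - ρ ^ 2) < 1 ∧
        v = lam * Δ + (1 / 2) * Real.log (1 - lam ^ 2 * (1 - ρ ^ 2))}) :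
    (ℙ {ω | Δ < (Z ω ^ 2 - Zt ω ^ 2) / 2}).toReal ≤ Real.exp (-D) := by
  have hZm : AEMeasurable Z ℙ := by
    by_contra h
    rw [Measure.map_of_not_aemeasurable h] at hZ
    have := congrArg (fun μ : Measure ℝ => μ Set.univ) hZ
    simp at this
  have hWm : AEMeasurable W ℙ := by
    by_contra h
    rw [Measure.map_of_not_aemeasurable h] at hW
    have := congrArg (fun μ : Measure ℝ => μ Set.univ) hW
    simp at this
  have hmap : Measure.map (fun ω => (Z ω, W ω)) ℙ
      = (gaussianReal 0 1).prod (gaussianReal 0 1) := by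
    rw [(indepFun_iff_map_prod_eq_prod_map_map hZm hWm).mp hind, hZ, hW]
  set A : Set Ω := {ω | Δ < (Z ω ^ 2 - Zt ω ^ 2) / 2} with hA
  -- key pointwise bound
  have key : ∀ v ∈ {v : ℝ | ∃ lam : ℝ, 0 ≤ lam ∧ lam ^ 2 * (1 - ρ ^ 2) < 1 ∧
      v = lam * Δ + (1 / 2) * Real.log (1 - lam ^ 2 * (1 - ρ ^ 2))},
      (ℙ A).toReal ≤ Real.exp (-v) := by
    rintro v ⟨L, hL, hL2, rfl⟩
    set F : ℝ × ℝ → ℝ≥0∞ := fun p => ENNReal.ofReal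
        (exp (L * ((p.1 ^ 2 - (ρ * p.1 + Real.sqrt (1 - ρ ^ 2) * p.2) ^ 2) / 2))) with hF
    have hFm : Measurable F := by fun_prop
    have hlin : ∫⁻ ω, F (Z ω, W ω) ∂ℙ
        = ENNReal.ofReal (exp (-((1/2) * Real.log (1 - L ^ 2 * (1 - ρ ^ 2))))) := by
      rw [← lintegral_map' (hFm.aemeasurable) (hZm.prodMk hWm), hmap]
      exact mgf_calc ρ L hρ hL hL2
    have hsub : A ⊆ {ω | ENNReal.ofReal (exp (L * Δ)) ≤ F (Z ω, W ω)} := by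
      intro ω hω
      have hω' : Δ < (Z ω ^ 2 - Zt ω ^ 2) / 2 := hω
      have hX : (Z ω ^ 2 - Zt ω ^ 2) / 2
          = (Z ω ^ 2 - (ρ * Z ω + Real.sqrt (1 - ρ ^ 2) * W ω) ^ 2) / 2 := by rw [hZt ω]
      have h1 : L * Δ ≤ L * ((Z ω ^ 2 - (ρ * Z ω + Real.sqrt (1 - ρ ^ 2) * W ω) ^ 2) / 2) := by
        rw [← hX]; exact mul_le_mul_of_nonneg_left hω'.le hL
      exact ENNReal.ofReal_le_ofReal (Real.exp_le_exp.mpr h1)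
    have markov := mul_meas_ge_le_lintegral₀
      (hFm.comp_aemeasurable (hZm.prodMk hWm))
      (ENNReal.ofReal (exp (L * Δ)))
    set ε : ℝ≥0∞ := ENNReal.ofReal (exp (L * Δ)) with hε
    have hε0 : ε ≠ 0 := by
      simp only [hε, ne_eq, ENNReal.ofReal_eq_zero, not_le]
      exact Real.exp_pos _
    have hεt : ε ≠ ⊤ := ENNReal.ofReal_ne_top
    have h3 : ε * ℙ A ≤ ENNReal.ofReal (exp (-((1/2) * Real.log (1 - L ^ 2 * (1 - ρ ^ 2))))) := by
      refine le_trans (mul_le_mul_right (measure_mono hsub) ε) ?_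
      exact le_trans markov (le_of_eq hlin)
    have h4 : ℙ A ≤ ENNReal.ofReal (exp (-(L * Δ + (1/2) * Real.log (1 - L ^ 2 * (1 - ρ ^ 2))))) := by
      calc ℙ A = ε⁻¹ * (ε * ℙ A) := by
            rw [← mul_assoc, ENNReal.inv_mul_cancel hε0 hεt, one_mul]
        _ ≤ ε⁻¹ * ENNReal.ofReal (exp (-((1/2) * Real.log (1 - L ^ 2 * (1 - ρ ^ 2))))) :=
            mul_le_mul_right h3 _
        _ = ENNReal.ofReal (exp (-(L * Δ + (1/2) * Real.log (1 - L ^ 2 * (1 - ρ ^ 2))))) := by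
            rw [hε, ← ENNReal.ofReal_inv_of_pos (Real.exp_pos _), ← Real.exp_neg,
              ← ENNReal.ofReal_mul (Real.exp_pos _).le, ← Real.exp_add]
            congr 1
            ring
    exact ENNReal.toReal_le_of_le_ofReal (Real.exp_pos _).le h4
  -- conclude via sup
  have hS0 : (0:ℝ) ∈ {v : ℝ | ∃ lam : ℝ, 0 ≤ lam ∧ lam ^ 2 * (1 - ρ ^ 2) < 1 ∧
      v = lam * Δ + (1 / 2) * Real.log (1 - lam ^ 2 * (1 - ρ ^ 2))} :=
    ⟨0, le_refl 0, by norm_num, by norm_num⟩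
  by_cases hp : (ℙ A).toReal ≤ 0
  · exact hp.trans (Real.exp_pos _).le
  · push_neg at hp
    have hub : ∀ v ∈ {v : ℝ | ∃ lam : ℝ, 0 ≤ lam ∧ lam ^ 2 * (1 - ρ ^ 2) < 1 ∧
        v = lam * Δ + (1 / 2) * Real.log (1 - lam ^ 2 * (1 - ρ ^ 2))},
        v ≤ -Real.log (ℙ A).toReal := by
      intro v hv
      have h := key v hv
      have h2 := Real.log_le_log hp h
      rw [Real.log_exp] at h2
      linarith
    have hDle : D ≤ -Real.log (ℙ A).toReal := by
      rw [hD]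
      exact csSup_le ⟨0, hS0⟩ hub
    calc (ℙ A).toReal = exp (Real.log (ℙ A).toReal) := (Real.exp_log hp).symm
      _ ≤ exp (-D) := Real.exp_le_exp.mpr (by linarith)
end

section
/- For the exponential power allocation P_ℓ proportional to e^{-2Cℓ/L} with total power P and any ξ ∈ (0,1], the limit as L → ∞ of L·P_{⌊ξL⌋} equals σ²·(1+snr)^{1-ξ}·ln(1+snr), where snr = P/σ² and C = (1/2)ln(1+snr). -/
open Real Filter

lemma aux_mul_exp_sub_one (a : ℝ) :
    Tendsto (fun L : ℕ => (L : ℝ) * (Real.exp (a / L) - 1)) atTop (nhds a) := by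
  have hd : HasDerivAt (fun x : ℝ => Real.exp (a * x)) a 0 := by
    have := ((hasDerivAt_id (0:ℝ)).const_mul a).exp
    simpa using this
  have hslope := hasDerivAt_iff_tendsto_slope.mp hd
  have hinv : Tendsto (fun L : ℕ => ((L : ℝ))⁻¹) atTop (nhds 0) :=
    tendsto_inv_atTop_zero.comp tendsto_natCast_atTop_atTop
  have hinv' : Tendsto (fun L : ℕ => ((L : ℝ))⁻¹) atTop (nhdsWithin 0 {(0:ℝ)}ᶜ) := by
    refine tendsto_nhdsWithin_of_tendsto_nhds_of_eventually_within _ hinv ?_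
    filter_upwards [eventually_ge_atTop 1] with L hL
    have : (0:ℝ) < L := by exact_mod_cast Nat.lt_of_lt_of_le Nat.zero_lt_one hL
    simp [ne_of_gt (inv_pos.mpr this)]
  have hcomp := hslope.comp hinv'
  refine hcomp.congr' ?_
  filter_upwards [eventually_ge_atTop 1] with L hL
  have hL0 : (0:ℝ) < L := by exact_mod_cast Nat.lt_of_lt_of_le Nat.zero_lt_one hL
  have hne : ((L:ℝ))⁻¹ ≠ 0 := ne_of_gt (inv_pos.mpr hL0)
  simp only [Function.comp, slope_def_field]
  rw [mul_zero, Real.exp_zero, mul_comm a, inv_mul_eq_div, sub_zero, div_eq_mul_inv, inv_inv]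
  ring


lemma aux_floor_div (ξ : ℝ) (hξ : 0 < ξ) :
    Tendsto (fun L : ℕ => (⌊ξ * (L : ℝ)⌋₊ : ℝ) / L) atTop (nhds ξ) := by
  have hinv : Tendsto (fun L : ℕ => ((L : ℝ))⁻¹) atTop (nhds 0) :=
    tendsto_inv_atTop_zero.comp tendsto_natCast_atTop_atTop
  have hlo : Tendsto (fun L : ℕ => ξ - ((L : ℝ))⁻¹) atTop (nhds ξ) := by
    have := (tendsto_const_nhds : Tendsto (fun _ : ℕ => ξ) atTop (nhds ξ)).sub hinv
    simpa using this
  have hhi : Tendsto (fun _ : ℕ => ξ) atTop (nhds ξ) := tendsto_const_nhds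
  refine tendsto_of_tendsto_of_tendsto_of_le_of_le' hlo hhi ?_ ?_
  · filter_upwards [eventually_ge_atTop 1] with L hL
    have hL0 : (0:ℝ) < L := by exact_mod_cast Nat.lt_of_lt_of_le Nat.zero_lt_one hL
    have h1 : ξ * L - 1 < (⌊ξ * (L : ℝ)⌋₊ : ℝ) := Nat.sub_one_lt_floor _
    have hinvL : ((L:ℝ))⁻¹ * L = 1 := inv_mul_cancel₀ (ne_of_gt hL0)
    rw [sub_le_iff_le_add, div_add' _ _ _ (ne_of_gt hL0), le_div_iff₀ hL0]
    nlinarith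
  · filter_upwards [eventually_ge_atTop 1] with L hL
    have hL0 : (0:ℝ) < L := by exact_mod_cast Nat.lt_of_lt_of_le Nat.zero_lt_one hL
    rw [div_le_iff₀ hL0]
    have := Nat.floor_le (a := ξ * (L:ℝ)) (by positivity)
    linarith [this]

theorem exp_power_allocation_limit (P σ2 ξ : ℝ) (hP : 0 < P) (hσ : 0 < σ2)
    (hξ : ξ ∈ Set.Ioc (0 : ℝ) 1)
    (snr C : ℝ) (hsnr : snr = P / σ2) (hC : C = (1 / 2) * Real.log (1 + snr)) :
    Filter.Tendsto
      (fun L : ℕ => (L : ℝ) *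
        (P * (Real.exp (2 * C / L) - 1) / (1 - Real.exp (-2 * C)) *
          Real.exp (-2 * C * (⌊ξ * (L : ℝ)⌋₊ : ℝ) / L)))
      Filter.atTop
      (nhds (σ2 * (1 + snr) ^ ((1 : ℝ) - ξ) * Real.log (1 + snr))) := by
  obtain ⟨hξ0, hξ1⟩ := hξ
  have hsnr0 : 0 < snr := by rw [hsnr]; positivity
  have h1snr : (1:ℝ) < 1 + snr := by linarith
  have h2C : 2 * C = Real.log (1 + snr) := by rw [hC]; ring
  have hexp2C : Real.exp (2 * C) = 1 + snr := by
    rw [h2C, Real.exp_log (by linarith)]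
  have hexpneg : Real.exp (-2 * C) = (1 + snr)⁻¹ := by
    rw [show (-2 : ℝ) * C = -(2*C) by ring, Real.exp_neg, hexp2C]
  have hden : 1 - Real.exp (-2 * C) = snr / (1 + snr) := by
    rw [hexpneg]; field_simp; ring
  have hdenne : 1 - Real.exp (-2 * C) ≠ 0 := by
    rw [hden]; positivity
  -- tendsto of the product form
  have h1 := aux_mul_exp_sub_one (2 * C)
  have h2 : Tendsto (fun L : ℕ => Real.exp (-2 * C * ((⌊ξ * (L : ℝ)⌋₊ : ℝ) / L)))
      atTop (nhds (Real.exp (-2 * C * ξ))) := by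
    exact (Real.continuous_exp.tendsto _).comp
      (((aux_floor_div ξ hξ0).const_mul (-2 * C)).congr (fun L => rfl))
  have hmain : Tendsto
      (fun L : ℕ => P / (1 - Real.exp (-2 * C)) *
        (((L : ℝ) * (Real.exp (2 * C / L) - 1)) *
          Real.exp (-2 * C * ((⌊ξ * (L : ℝ)⌋₊ : ℝ) / L))))
      atTop
      (nhds (P / (1 - Real.exp (-2 * C)) * ((2 * C) * Real.exp (-2 * C * ξ)))) :=
    tendsto_const_nhds.mul (h1.mul h2)
  have heq : (σ2 * (1 + snr) ^ ((1 : ℝ) - ξ) * Real.log (1 + snr)) =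
      P / (1 - Real.exp (-2 * C)) * ((2 * C) * Real.exp (-2 * C * ξ)) := by
    have hrp : (1 + snr) ^ ((1 : ℝ) - ξ) = (1 + snr) * Real.exp (-2 * C * ξ) := by
      rw [Real.rpow_def_of_pos (by linarith)]
      rw [show Real.log (1+snr) * (1 - ξ) = Real.log (1+snr) + Real.log (1+snr) * (-ξ) by ring,
        Real.exp_add, Real.exp_log (by linarith),
        show -2 * C * ξ = Real.log (1 + snr) * (-ξ) by rw [← h2C]; ring]
    rw [hden, hrp, h2C, hsnr]
    have hP' : P / σ2 ≠ 0 := by positivity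
    field_simp
  rw [heq]
  refine hmain.congr ?_
  intro L
  rw [mul_div_assoc (-2 * C)]
  ring
end

section
/- Let n ∈ ℕ, h = 2/√n, and x_k = -√n + 2k/√n for k = 0,...,n. For μ ∈ ℝ and s > 0, let I_d = h·Σ_{k=0}^n exp(-s²(x_k - μ)²/2) and I_c = ∫_{-∞}^{∞} exp(-s²(x-μ)²/2) dx. Then I_d ≤ (1 + η s²/n)·I_c, where η = 3/√(8πe). -/
open MeasureTheory intervalIntegral

namespace GaussRiemann

noncomputable def F (μ s x : ℝ) : ℝ := Real.exp (-(s ^ 2 / 2) * (x - μ) ^ 2)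
noncomputable def F' (μ s x : ℝ) : ℝ := (-(s ^ 2) * (x - μ)) * F μ s x
noncomputable def F'' (μ s x : ℝ) : ℝ := (s ^ 2 * (s ^ 2 * (x - μ) ^ 2 - 1)) * F μ s x
noncomputable def G (μ s x : ℝ) : ℝ := max ((s ^ 2 * (1 - s ^ 2 * (x - μ) ^ 2)) * F μ s x) 0

variable (μ s : ℝ)

lemma F_pos (x : ℝ) : 0 < F μ s x := Real.exp_pos _

lemma hasDerivAt_F (x : ℝ) : HasDerivAt (F μ s) (F' μ s x) x := by
  have h1 : HasDerivAt (fun x : ℝ => -(s ^ 2 / 2) * (x - μ) ^ 2)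
      (-(s ^ 2 / 2) * (2 * (x - μ))) x := by
    exact (((hasDerivAt_id x).sub_const μ).pow 2).const_mul _ |>.congr_deriv
      (by simp only [id_eq]; ring)
  have := h1.exp
  exact this.congr_deriv (by unfold F' F; ring)

lemma hasDerivAt_F' (x : ℝ) : HasDerivAt (F' μ s) (F'' μ s x) x := by
  have h1 : HasDerivAt (fun x : ℝ => -(s ^ 2) * (x - μ)) (-(s ^ 2)) x := by
    exact ((hasDerivAt_id x).sub_const μ).const_mul _ |>.congr_deriv (by ring)
  have := h1.mul (hasDerivAt_F μ s x)
  exact this.congr_deriv (by unfold F'' F' F; ring)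

lemma continuous_F : Continuous (F μ s) := by
  unfold F; fun_prop

lemma continuous_F' : Continuous (F' μ s) := by
  unfold F' F; fun_prop

lemma continuous_F'' : Continuous (F'' μ s) := by
  unfold F'' F; fun_prop

lemma continuous_G : Continuous (G μ s) := by
  unfold G F
  apply Continuous.max _ continuous_const
  fun_prop

lemma G_nonneg (x : ℝ) : 0 ≤ G μ s x := le_max_right _ _

lemma neg_F''_le_G (x : ℝ) : -(F'' μ s x) ≤ G μ s x := by
  have : -(F'' μ s x) = (s ^ 2 * (1 - s ^ 2 * (x - μ) ^ 2)) * F μ s x := by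
    unfold F'' ; ring
  rw [this]; exact le_max_left _ _

lemma G_le (x : ℝ) : G μ s x ≤ s ^ 2 * F μ s x := by
  apply max_le
  · apply mul_le_mul_of_nonneg_right _ (F_pos μ s x).le
    nlinarith [sq_nonneg (s * (x - μ)), sq_nonneg s]
  · exact mul_nonneg (by positivity) (F_pos μ s x).le

lemma integrable_F (hs : 0 < s) : Integrable (F μ s) := by
  have h : Integrable (fun x : ℝ => Real.exp (-(s ^ 2 / 2) * x ^ 2)) :=
    integrable_exp_neg_mul_sq (by positivity)
  have := h.comp_sub_right μ
  exact this

lemma integrable_G (hs : 0 < s) : Integrable (G μ s) := by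
  apply Integrable.mono ((integrable_F μ s hs).const_mul (s ^ 2))
    (continuous_G μ s).aestronglyMeasurable
  filter_upwards with x
  rw [Real.norm_eq_abs, Real.norm_eq_abs, abs_of_nonneg (G_nonneg μ s x),
    abs_of_nonneg (mul_nonneg (by positivity) (F_pos μ s x).le)]
  exact G_le μ s x

/-- key midpoint bound on one cell -/
lemma key (m h : ℝ) (hh : 0 < h) :
    h * F μ s m ≤ (∫ x in (m - h / 2)..(m + h / 2), F μ s x)
      + h ^ 2 / 8 * ∫ x in (m - h / 2)..(m + h / 2), G μ s x := by
  set GI := ∫ x in (m - h / 2)..(m + h / 2), G μ s x with hGI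
  have hcF := continuous_F μ s
  have hcG := continuous_G μ s
  have c1 : Continuous (fun u : ℝ => F μ s (m + u)) := by unfold F; fun_prop
  have c2 : Continuous (fun u : ℝ => F μ s (m - u)) := by unfold F; fun_prop
  -- Step B : pointwise bound
  have stepB : ∀ u ∈ Set.Icc (0:ℝ) (h / 2),
      2 * F μ s m - (F μ s (m + u) + F μ s (m - u)) ≤ u * GI := by
    intro u hu
    obtain ⟨hu0, huh⟩ := hu
    have hderiv : ∀ t ∈ Set.uIcc (0:ℝ) u,
        HasDerivAt (fun t => F μ s (m + t) + F μ s (m - t))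
          (F' μ s (m + t) - F' μ s (m - t)) t := by
      intro t _
      have h1 := (hasDerivAt_F μ s (m + t)).comp t ((hasDerivAt_id t).const_add m)
      have h2 := (hasDerivAt_F μ s (m - t)).comp t ((hasDerivAt_const t m).sub (hasDerivAt_id t))
      simp only [mul_one, mul_neg_one] at h1 h2
      exact (h1.add h2).congr_deriv (by ring)
    have hint : IntervalIntegrable (fun t => F' μ s (m + t) - F' μ s (m - t)) volume 0 u := by
      apply Continuous.intervalIntegrable
      have := continuous_F' μ s
      fun_prop
    have hFTC := intervalIntegral.integral_eq_sub_of_hasDerivAt hderiv hint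
    simp only [add_zero, sub_zero] at hFTC
    have hlow : ∀ t ∈ Set.Icc (0:ℝ) u, -GI ≤ F' μ s (m + t) - F' μ s (m - t) := by
      intro t ht
      obtain ⟨ht0, htu⟩ := ht
      have hFTC2 : ∫ x in (m - t)..(m + t), F'' μ s x = F' μ s (m + t) - F' μ s (m - t) := by
        apply intervalIntegral.integral_eq_sub_of_hasDerivAt
        · intro x _; exact hasDerivAt_F' μ s x
        · exact (continuous_F'' μ s).intervalIntegrable _ _
      have h1 : -GI ≤ ∫ x in (m - t)..(m + t), F'' μ s x := by
        have hmono : ∫ x in (m - t)..(m + t), G μ s x ≤ GI := by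
          apply intervalIntegral.integral_mono_interval (by linarith) (by linarith) (by linarith)
          · filter_upwards with x using G_nonneg μ s x
          · exact hcG.intervalIntegrable _ _
        have hneg : (∫ x in (m - t)..(m + t), -(G μ s x)) ≤ ∫ x in (m - t)..(m + t), F'' μ s x := by
          apply intervalIntegral.integral_mono_on (by linarith)
          · exact (hcG.neg).intervalIntegrable _ _
          · exact (continuous_F'' μ s).intervalIntegrable _ _
          · intro x _
            have := neg_F''_le_G μ s x
            linarith
        rw [intervalIntegral.integral_neg] at hneg
        linarith
      linarith [hFTC2 ▸ h1]
    have hmono2 : ∫ t in (0:ℝ)..u, (-GI : ℝ)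
        ≤ ∫ t in (0:ℝ)..u, (F' μ s (m + t) - F' μ s (m - t)) := by
      apply intervalIntegral.integral_mono_on hu0 (intervalIntegrable_const) hint
      intro t ht; exact hlow t ht
    rw [intervalIntegral.integral_const, smul_eq_mul, sub_zero] at hmono2
    rw [hFTC] at hmono2
    nlinarith [hmono2]
  -- Step A : rewrite the integral
  have stepA : (∫ x in (m - h / 2)..(m + h / 2), F μ s x)
      = ∫ u in (0:ℝ)..(h / 2), (F μ s (m + u) + F μ s (m - u)) := by
    have split : (∫ x in (m - h / 2)..(m + h / 2), F μ s x)
        = (∫ x in (m - h / 2)..m, F μ s x) + ∫ x in m..(m + h / 2), F μ s x := by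
      rw [intervalIntegral.integral_add_adjacent_intervals
        (hcF.intervalIntegrable _ _) (hcF.intervalIntegrable _ _)]
    have h1 : (∫ u in (0:ℝ)..(h / 2), F μ s (m + u)) = ∫ x in m..(m + h / 2), F μ s x := by
      simpa using intervalIntegral.integral_comp_add_left (a := (0:ℝ)) (b := h / 2) (F μ s) m
    have h2 : (∫ u in (0:ℝ)..(h / 2), F μ s (m - u)) = ∫ x in (m - h / 2)..m, F μ s x := by
      simpa using intervalIntegral.integral_comp_sub_left (a := (0:ℝ)) (b := h / 2) (F μ s) m
    rw [intervalIntegral.integral_add (c1.intervalIntegrable _ _) (c2.intervalIntegrable _ _),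
      h1, h2, split]
    ring
  -- Step C : conclude
  have hfinal : (∫ u in (0:ℝ)..(h / 2), (2 * F μ s m - (F μ s (m + u) + F μ s (m - u))))
      ≤ ∫ u in (0:ℝ)..(h / 2), u * GI := by
    apply intervalIntegral.integral_mono_on (by linarith)
    · exact IntervalIntegrable.sub intervalIntegrable_const
        ((c1.add c2).intervalIntegrable _ _)
    · exact (by fun_prop : Continuous (fun u : ℝ => u * GI)).intervalIntegrable _ _
    · exact stepB
  have hrhs : (∫ u in (0:ℝ)..(h / 2), u * GI) = h ^ 2 / 8 * GI := by
    rw [intervalIntegral.integral_mul_const, integral_id]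
    ring
  have hsub : (∫ u in (0:ℝ)..(h / 2), (2 * F μ s m - (F μ s (m + u) + F μ s (m - u))))
      = h * F μ s m - ∫ x in (m - h / 2)..(m + h / 2), F μ s x := by
    rw [intervalIntegral.integral_sub (f := fun _ => 2 * F μ s m)
      (g := fun u => F μ s (m + u) + F μ s (m - u)) intervalIntegrable_const
      ((c1.add c2).intervalIntegrable _ _)]
    rw [intervalIntegral.integral_const, smul_eq_mul, stepA]
    ring
  rw [hsub, hrhs] at hfinal
  linarith

lemma integral_F (hs : 0 < s) : (∫ x : ℝ, F μ s x) = Real.sqrt (2 * Real.pi) / s := by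
  unfold F
  rw [integral_sub_right_eq_self (μ := volume)
    (fun x => Real.exp (-(s ^ 2 / 2) * x ^ 2)) μ]
  rw [integral_gaussian]
  rw [show Real.pi / (s ^ 2 / 2) = (2 * Real.pi) / s ^ 2 by field_simp]
  rw [Real.sqrt_div (by positivity : (0:ℝ) ≤ 2 * Real.pi), Real.sqrt_sq hs.le]

lemma integral_G_le (hs : 0 < s) : (∫ x : ℝ, G μ s x) ≤ 2 * s * Real.exp (-(1/2) : ℝ) := by
  have hss : s ^ 2 * (1 / s ^ 2) = 1 := by field_simp
  have hJ : (∫ x : ℝ, G μ s x) = ∫ x in Set.Ioc (μ - 1/s) (μ + 1/s), G μ s x := by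
    symm
    apply setIntegral_eq_integral_of_forall_compl_eq_zero
    intro x hx
    simp only [Set.mem_Ioc, not_and_or, not_lt, not_le] at hx
    have hx2 : 1 / s ^ 2 ≤ (x - μ) ^ 2 := by
      have h1s : 0 < 1 / s := one_div_pos.mpr hs
      rcases hx with hx | hx
      · have h3 : 1 / s ≤ μ - x := by linarith
        nlinarith [mul_le_mul h3 h3 h1s.le (by linarith : (0:ℝ) ≤ μ - x),
          (by ring : (1/s)*(1/s) = 1/s^2)]
      · have h3 : 1 / s ≤ x - μ := by linarith
        nlinarith [mul_le_mul h3 h3 h1s.le (by linarith : (0:ℝ) ≤ x - μ),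
          (by ring : (1/s)*(1/s) = 1/s^2)]
    unfold G
    apply max_eq_right
    apply mul_nonpos_of_nonpos_of_nonneg _ (F_pos μ s x).le
    nlinarith [mul_le_mul_of_nonneg_left hx2 (sq_nonneg s)]
  rw [hJ]
  have hle : μ - 1/s ≤ μ + 1/s := by
    have := one_div_pos.mpr hs; linarith
  rw [← intervalIntegral.integral_of_le hle]
  have hcongr : (∫ x in (μ - 1/s)..(μ + 1/s), G μ s x)
      = ∫ x in (μ - 1/s)..(μ + 1/s), -(F'' μ s x) := by
    apply intervalIntegral.integral_congr
    intro x hx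
    rw [Set.uIcc_of_le hle] at hx
    obtain ⟨h1, h2⟩ := hx
    have hx2 : (x - μ) ^ 2 ≤ 1 / s ^ 2 := by
      have h1s : 0 < 1 / s := one_div_pos.mpr hs
      have hsq := sq_le_sq' (show -(1/s) ≤ x - μ by linarith) (show x - μ ≤ 1/s by linarith)
      calc (x - μ) ^ 2 ≤ (1/s) ^ 2 := hsq
        _ = 1 / s ^ 2 := by rw [div_pow, one_pow]
    unfold G F''
    rw [max_eq_left]
    · ring
    · apply mul_nonneg _ (F_pos μ s x).le
      nlinarith [mul_le_mul_of_nonneg_left hx2 (sq_nonneg s)]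
  have hFTC : (∫ x in (μ - 1/s)..(μ + 1/s), F'' μ s x)
      = F' μ s (μ + 1/s) - F' μ s (μ - 1/s) := by
    apply intervalIntegral.integral_eq_sub_of_hasDerivAt
    · intro x _; exact hasDerivAt_F' μ s x
    · exact (continuous_F'' μ s).intervalIntegrable _ _
  have hv1 : F' μ s (μ + 1/s) = -s * Real.exp (-(1/2) : ℝ) := by
    unfold F' F
    rw [show μ + 1/s - μ = 1/s by ring,
      show -(s ^ 2 / 2) * (1/s) ^ 2 = (-(1/2) : ℝ) by field_simp,
      show -(s ^ 2) * (1/s) = -s by field_simp]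
  have hv2 : F' μ s (μ - 1/s) = s * Real.exp (-(1/2) : ℝ) := by
    unfold F' F
    rw [show μ - 1/s - μ = -(1/s) by ring,
      show -(s ^ 2 / 2) * (-(1/s)) ^ 2 = (-(1/2) : ℝ) by field_simp,
      show -(s ^ 2) * (-(1/s)) = s by field_simp]
  rw [hcongr, intervalIntegral.integral_neg, hFTC, hv1, hv2]
  ring_nf
  exact le_refl _

end GaussRiemann

open GaussRiemann MeasureTheory

theorem gaussian_riemann_sum_bound (n : ℕ) (hn : 1 ≤ n) (μ s : ℝ) (hs : 0 < s) :
    (2 / Real.sqrt n) * ∑ k ∈ Finset.range (n + 1),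
        Real.exp (-(s ^ 2 / 2) * ((-Real.sqrt n + 2 * (k : ℝ) / Real.sqrt n) - μ) ^ 2)
      ≤ (1 + (3 / Real.sqrt (8 * Real.pi * Real.exp 1)) * s ^ 2 / n) *
        ∫ x : ℝ, Real.exp (-(s ^ 2 / 2) * (x - μ) ^ 2) := by
  have hn0 : (0:ℝ) < n := by exact_mod_cast Nat.pos_of_ne_zero (by omega)
  set h : ℝ := 2 / Real.sqrt n with hh_def
  have hsn : 0 < Real.sqrt n := Real.sqrt_pos.mpr hn0
  have hh : 0 < h := by positivity
  have hsq : Real.sqrt n * Real.sqrt n = (n : ℝ) := Real.mul_self_sqrt hn0.le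
  have hh2 : h ^ 2 = 4 / n := by
    rw [hh_def, div_pow, Real.sq_sqrt hn0.le]; norm_num
  set x : ℕ → ℝ := fun k => -Real.sqrt n + k * h with hx_def
  set a : ℕ → ℝ := fun k => -Real.sqrt n - h / 2 + k * h with ha_def
  have hterm : ∀ k : ℕ,
      Real.exp (-(s ^ 2 / 2) * ((-Real.sqrt n + 2 * (k : ℝ) / Real.sqrt n) - μ) ^ 2)
        = F μ s (x k) := by
    intro k
    unfold F
    rw [hx_def]
    congr 3
    rw [hh_def]; ring
  have key' : ∀ k : ℕ, h * F μ s (x k)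
      ≤ (∫ t in (a k)..(a (k+1)), F μ s t) + h ^ 2 / 8 * ∫ t in (a k)..(a (k+1)), G μ s t := by
    intro k
    have e1 : a k = x k - h / 2 := by rw [ha_def, hx_def]; ring
    have e2 : a (k+1) = x k + h / 2 := by rw [ha_def, hx_def]; push_cast; ring
    rw [e1, e2]
    exact key μ s (x k) h hh
  have hsum : (2 / Real.sqrt n) * ∑ k ∈ Finset.range (n + 1),
      Real.exp (-(s ^ 2 / 2) * ((-Real.sqrt n + 2 * (k : ℝ) / Real.sqrt n) - μ) ^ 2)
      = ∑ k ∈ Finset.range (n + 1), h * F μ s (x k) := by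
    rw [Finset.mul_sum]
    exact Finset.sum_congr rfl fun k _ => by rw [hterm k]
  have hsumF : ∑ k ∈ Finset.range (n + 1), (∫ t in (a k)..(a (k+1)), F μ s t)
      = ∫ t in (a 0)..(a (n+1)), F μ s t := by
    apply intervalIntegral.sum_integral_adjacent_intervals
    intro k _
    exact (continuous_F μ s).intervalIntegrable _ _
  have hsumG' : ∑ k ∈ Finset.range (n + 1), (∫ t in (a k)..(a (k+1)), G μ s t)
      = ∫ t in (a 0)..(a (n+1)), G μ s t := by
    apply intervalIntegral.sum_integral_adjacent_intervals
    intro k _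
    exact (continuous_G μ s).intervalIntegrable _ _
  have ha_le : a 0 ≤ a (n + 1) := by
    rw [ha_def]
    simp only [Nat.cast_zero, Nat.cast_add, Nat.cast_one]
    nlinarith [hh.le, hn0.le]
  have hFle : (∫ t in (a 0)..(a (n+1)), F μ s t) ≤ ∫ t : ℝ, F μ s t := by
    rw [intervalIntegral.integral_of_le ha_le]
    exact setIntegral_le_integral (integrable_F μ s hs)
      (Filter.Eventually.of_forall fun t => (F_pos μ s t).le)
  have hGle : (∫ t in (a 0)..(a (n+1)), G μ s t) ≤ ∫ t : ℝ, G μ s t := by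
    rw [intervalIntegral.integral_of_le ha_le]
    exact setIntegral_le_integral (integrable_G μ s hs)
      (Filter.Eventually.of_forall fun t => G_nonneg μ s t)
  have hbound : (2 / Real.sqrt n) * ∑ k ∈ Finset.range (n + 1),
      Real.exp (-(s ^ 2 / 2) * ((-Real.sqrt n + 2 * (k : ℝ) / Real.sqrt n) - μ) ^ 2)
      ≤ (∫ t : ℝ, F μ s t) + h ^ 2 / 8 * (2 * s * Real.exp (-(1/2) : ℝ)) := by
    rw [hsum]
    calc ∑ k ∈ Finset.range (n + 1), h * F μ s (x k)
        ≤ ∑ k ∈ Finset.range (n + 1),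
          ((∫ t in (a k)..(a (k+1)), F μ s t) + h ^ 2 / 8 * ∫ t in (a k)..(a (k+1)), G μ s t) :=
          Finset.sum_le_sum fun k _ => key' k
      _ = (∑ k ∈ Finset.range (n + 1), (∫ t in (a k)..(a (k+1)), F μ s t))
          + h ^ 2 / 8 * ∑ k ∈ Finset.range (n + 1), (∫ t in (a k)..(a (k+1)), G μ s t) := by
          rw [Finset.sum_add_distrib, Finset.mul_sum]
      _ ≤ (∫ t : ℝ, F μ s t) + h ^ 2 / 8 * (2 * s * Real.exp (-(1/2) : ℝ)) := by
          rw [hsumF, hsumG']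
          have hG2 := (hGle.trans (integral_G_le μ s hs))
          have h8 : (0:ℝ) < h ^ 2 / 8 := by positivity
          nlinarith [hFle, hG2, h8.le]
  -- now the arithmetic
  have hIc : (∫ x_1 : ℝ, Real.exp (-(s ^ 2 / 2) * (x_1 - μ) ^ 2)) = Real.sqrt (2 * Real.pi) / s :=
    integral_F μ s hs
  have hIcF : (∫ t : ℝ, F μ s t) = Real.sqrt (2 * Real.pi) / s := integral_F μ s hs
  rw [hIc]
  have hconst : Real.sqrt (8 * Real.pi * Real.exp 1)
      = 2 * Real.exp (1/2 : ℝ) * Real.sqrt (2 * Real.pi) := by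
    rw [show (8:ℝ) * Real.pi * Real.exp 1 = (4 * Real.exp 1) * (2 * Real.pi) by ring]
    rw [Real.sqrt_mul (by positivity)]
    congr 1
    rw [show (4:ℝ) * Real.exp 1 = 2 ^ 2 * Real.exp 1 by norm_num]
    rw [Real.sqrt_mul (by positivity), Real.sqrt_sq (by norm_num : (0:ℝ) ≤ 2)]
    rw [Real.exp_half]
  refine hbound.trans ?_
  rw [hIcF, hh2, hconst]
  have hE : Real.exp (-(1/2) : ℝ) = (Real.exp (1/2 : ℝ))⁻¹ := by
    rw [← Real.exp_neg]
  have hE0 : 0 < Real.exp (1/2 : ℝ) := Real.exp_pos _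
  have h2pi : 0 < Real.sqrt (2 * Real.pi) := Real.sqrt_pos.mpr (by positivity)
  rw [hE, add_mul, one_mul]
  apply add_le_add le_rfl
  have hEne : Real.exp (1/2 : ℝ) ≠ 0 := ne_of_gt hE0
  have hpne : Real.sqrt (2 * Real.pi) ≠ 0 := ne_of_gt h2pi
  have hsne : s ≠ 0 := ne_of_gt hs
  have hnne : (n:ℝ) ≠ 0 := ne_of_gt hn0
  have hlhs_eq : 4 / (n:ℝ) / 8 * (2 * s * (Real.exp (1/2 : ℝ))⁻¹)
      = s / (Real.exp (1/2 : ℝ) * n) := by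
    field_simp; ring
  have hrhs_eq : 3 / (2 * Real.exp (1/2 : ℝ) * Real.sqrt (2 * Real.pi)) * s ^ 2 / n
      * (Real.sqrt (2 * Real.pi) / s) = 3 * s / (2 * (Real.exp (1/2 : ℝ) * n)) := by
    field_simp
  rw [hlhs_eq, hrhs_eq]
  rw [div_le_div_iff₀ (by positivity) (by positivity)]
  nlinarith [mul_pos hE0 hn0, mul_pos hs (mul_pos hE0 hn0)]
end

section
/- Consider the asymptotic state evolution for an (ω, Λ) base matrix: ψ̄_c^0 = 1 for all c ∈ [Λ], φ̄_r^t = σ²(1 + (κ·snr/ω)·Σ_{c=c̲_r}^{c̄_r} ψ̄_c^t) and ψ̄_c^{t+1} = 1 - 1{(P/ω)Σ_{r=c}^{c+ω-1} 1/φ̄_r^t > 2R}, with κ = (Λ+ω-1)/Λ. If R < snr/(2(1+κ·snr)), then ψ̄_c^1 = 0 for all c ∈ [Λ], i.e., the entire codeword decodes in one iteration. -/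
open scoped Classical

theorem sc_se_one_iteration_decoding (σ2 P R : ℝ) (hσ : 0 < σ2) (hP : 0 < P) (hR : 0 < R)
    (ω Λ : ℕ) (hω : 1 ≤ ω) (hΛ : 2 * ω - 1 ≤ Λ)
    (snr κ : ℝ) (hsnr : snr = P / σ2) (hκ : κ = ((Λ : ℝ) + ω - 1) / Λ)
    (ψ0 : ℕ → ℝ) (hψ0 : ∀ c, ψ0 c = 1)
    (φ0 : ℕ → ℝ)
    (hφ0 : ∀ r, φ0 r =
      σ2 * (1 + κ * snr / ω * ∑ c ∈ Finset.Icc (max 1 (r + 1 - ω)) (min r Λ), ψ0 c))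
    (ψ1 : ℕ → ℝ)
    (hψ1 : ∀ c, ψ1 c =
      1 - if 2 * R < P / ω * ∑ r ∈ Finset.Icc c (c + ω - 1), 1 / φ0 r then 1 else 0)
    (hRlt : R < snr / (2 * (1 + κ * snr))) :
    ∀ c ∈ Finset.Icc 1 Λ, ψ1 c = 0 := by
  intro c hc
  have hΛ1 : 1 ≤ Λ := by omega
  have hωR : (0:ℝ) < (ω:ℝ) := by exact_mod_cast hω
  have hκ0 : 0 ≤ κ := by
    rw [hκ]
    apply div_nonneg
    · have h1 : (1:ℝ) ≤ (Λ:ℝ) := by exact_mod_cast hΛ1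
      have h2 : (0:ℝ) < (ω:ℝ) := hωR
      linarith
    · positivity
  have hsnr0 : 0 < snr := by rw [hsnr]; positivity
  have hks : 0 ≤ κ * snr := mul_nonneg hκ0 hsnr0.le
  set K : ℝ := σ2 * (1 + κ * snr) with hKdef
  have hK : 0 < K := by positivity
  have hφpos : ∀ r, 0 < φ0 r := by
    intro r
    rw [hφ0]
    have hsum : ∑ x ∈ Finset.Icc (max 1 (r + 1 - ω)) (min r Λ), ψ0 x
        = ((Finset.Icc (max 1 (r + 1 - ω)) (min r Λ)).card : ℝ) := by
      simp [hψ0]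
    rw [hsum]
    have h1 : 0 ≤ κ * snr / ω * ((Finset.Icc (max 1 (r + 1 - ω)) (min r Λ)).card : ℝ) := by
      positivity
    nlinarith
  have hφub : ∀ r, φ0 r ≤ K := by
    intro r
    rw [hφ0]
    have hsum : ∑ x ∈ Finset.Icc (max 1 (r + 1 - ω)) (min r Λ), ψ0 x
        = ((Finset.Icc (max 1 (r + 1 - ω)) (min r Λ)).card : ℝ) := by
      simp [hψ0]
    rw [hsum]
    have hcard : ((Finset.Icc (max 1 (r + 1 - ω)) (min r Λ)).card : ℝ) ≤ (ω:ℝ) := by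
      have : (Finset.Icc (max 1 (r + 1 - ω)) (min r Λ)).card ≤ ω := by
        rw [Nat.card_Icc]; omega
      exact_mod_cast this
    have h1 : κ * snr / ω * ((Finset.Icc (max 1 (r + 1 - ω)) (min r Λ)).card : ℝ)
        ≤ κ * snr / ω * (ω:ℝ) := by
      apply mul_le_mul_of_nonneg_left hcard
      positivity
    have h2 : κ * snr / ω * (ω:ℝ) = κ * snr := div_mul_cancel₀ _ hωR.ne'
    nlinarith
  have hsumlb : (ω:ℝ) * (1 / K) ≤ ∑ r ∈ Finset.Icc c (c + ω - 1), 1 / φ0 r := by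
    have hcard : (Finset.Icc c (c + ω - 1)).card = ω := by
      rw [Nat.card_Icc]; omega
    have h1 : ∑ r ∈ Finset.Icc c (c + ω - 1), (1 / K)
        ≤ ∑ r ∈ Finset.Icc c (c + ω - 1), 1 / φ0 r := by
      apply Finset.sum_le_sum
      intro i _
      exact one_div_le_one_div_of_le (hφpos i) (hφub i)
    simpa [hcard, mul_comm] using h1
  have hcond : 2 * R < P / ω * ∑ r ∈ Finset.Icc c (c + ω - 1), 1 / φ0 r := by
    have h1 : P / ω * ((ω:ℝ) * (1 / K)) ≤ P / ω * ∑ r ∈ Finset.Icc c (c + ω - 1), 1 / φ0 r := by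
      apply mul_le_mul_of_nonneg_left hsumlb
      positivity
    have h2 : P / ω * ((ω:ℝ) * (1 / K)) = P / K := by
      field_simp
    have h3 : 2 * R < P / K := by
      have hS : 0 < 1 + κ * snr := by linarith
      rw [lt_div_iff₀ (by positivity)] at hRlt
      have hb : snr * σ2 = P := by rw [hsnr]; field_simp
      rw [hKdef, lt_div_iff₀ (by positivity)]
      nlinarith
    linarith [h2 ▸ h1]
  rw [hψ1, if_pos hcond]
  ring
end

section
/- For the spatially coupled state evolution, if ω > (1/(e^{2Rκ} - 1) - 1/(κ·snr))^{-1} (with the RHS positive), then the first column decodes in the first iteration: (κ·snr/ω)·Σ_{r=1}^{ω} 1/(1 + (κ·snr/ω)·r) > 2Rκ. The key step is the Riemann sum bound (κ·snr/ω)·Σ_{r=1}^{ω} 1/(1 + (κ·snr/ω)r) > ln(1 + κ·snr/(1 + κ·snr/ω)). -/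
theorem sc_first_column_decodes (κ snr R : ℝ) (hκ : 0 < κ) (hsnr : 0 < snr) (hR : 0 < R)
    (ω : ℕ) (hω : 1 ≤ ω)
    (hpos : 0 < 1 / (Real.exp (2 * R * κ) - 1) - 1 / (κ * snr))
    (hωgt : (1 / (Real.exp (2 * R * κ) - 1) - 1 / (κ * snr))⁻¹ < (ω : ℝ)) :
    Real.log (1 + κ * snr / (1 + κ * snr / ω)) <
        κ * snr / ω * ∑ r ∈ Finset.Icc 1 ω, 1 / (1 + κ * snr / ω * (r : ℝ)) ∧
    2 * R * κ < κ * snr / ω * ∑ r ∈ Finset.Icc 1 ω, 1 / (1 + κ * snr / ω * (r : ℝ)) := by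
  have hω' : (0:ℝ) < ω := by exact_mod_cast Nat.lt_of_lt_of_le Nat.zero_lt_one hω
  have hks : 0 < κ * snr := mul_pos hκ hsnr
  set c : ℝ := κ * snr / ω with hc
  have hcpos : 0 < c := div_pos hks hω'
  -- telescoping identity
  have hform : 1 + κ * snr / (1 + c) = (1 + c * (ω + 1)) / (1 + c) := by
    rw [hc]; field_simp; ring
  have hsum : ∀ n : ℕ, ∑ r ∈ Finset.Icc 1 n,
      (Real.log (1 + c * ((r:ℝ) + 1)) - Real.log (1 + c * (r:ℝ)))
      = Real.log (1 + c * ((n:ℝ) + 1)) - Real.log (1 + c) := by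
    intro n
    induction n with
    | zero => norm_num
    | succ n ih =>
        rw [Finset.sum_Icc_succ_top (Nat.le_add_left 1 n), ih]
        push_cast
        ring_nf
  have htel : Real.log (1 + κ * snr / (1 + c)) =
      ∑ r ∈ Finset.Icc 1 ω, (Real.log (1 + c * ((r:ℝ) + 1)) - Real.log (1 + c * (r:ℝ))) := by
    rw [hform, Real.log_div (by positivity) (by positivity), hsum ω]
  have key : Real.log (1 + κ * snr / (1 + c)) <
      c * ∑ r ∈ Finset.Icc 1 ω, 1 / (1 + c * (r:ℝ)) := by
    rw [htel, Finset.mul_sum]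
    apply Finset.sum_lt_sum_of_nonempty
    · exact Finset.nonempty_Icc.mpr hω
    · intro r hr
      have hr1 : (1:ℝ) ≤ (r:ℝ) := by
        exact_mod_cast (Finset.mem_Icc.mp hr).1
      have hd : 0 < 1 + c * (r:ℝ) := by positivity
      have hx : (0:ℝ) < (1 + c * ((r:ℝ) + 1)) / (1 + c * (r:ℝ)) := by positivity
      have hne : (1 + c * ((r:ℝ) + 1)) / (1 + c * (r:ℝ)) ≠ 1 := by
        have hgt : (1:ℝ) < (1 + c * ((r:ℝ) + 1)) / (1 + c * (r:ℝ)) := by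
          rw [lt_div_iff₀ hd]; nlinarith
        exact ne_of_gt hgt
      have := Real.log_lt_sub_one_of_pos hx hne
      rw [Real.log_div (by positivity) (by positivity)] at this
      calc Real.log (1 + c * ((r:ℝ) + 1)) - Real.log (1 + c * (r:ℝ))
          < (1 + c * ((r:ℝ) + 1)) / (1 + c * (r:ℝ)) - 1 := this
        _ = c * (1 / (1 + c * (r:ℝ))) := by field_simp; ring
  refine ⟨key, lt_trans ?_ key⟩
  -- second part: 2Rκ < log(1 + κsnr/(1+c))
  set E := Real.exp (2 * R * κ) with hE
  have hE1 : 1 < E := by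
    rw [hE, ← Real.exp_zero]; exact Real.exp_lt_exp.mpr (by positivity)
  have hD : 0 < E - 1 := by linarith
  have h1 : E - 1 < κ * snr := by
    have := hpos
    rw [sub_pos, div_lt_div_iff₀ hks hD] at this
    linarith
  have h2 : 1 < (1 / (E - 1) - 1 / (κ * snr)) * ω := by
    have := mul_lt_mul_of_pos_left hωgt hpos
    rwa [mul_inv_cancel₀ (ne_of_gt hpos)] at this
  have h3 : (E - 1) * (κ * snr) < (κ * snr - (E - 1)) * ω := by
    have hne1 : E - 1 ≠ 0 := ne_of_gt hD
    have hne2 : κ * snr ≠ 0 := ne_of_gt hks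
    field_simp at h2
    linarith [h2, mul_assoc (E - 1) κ snr]
  have hcω : c * ω = κ * snr := by rw [hc]; field_simp
  have h4 : E < 1 + κ * snr / (1 + c) := by
    have hden : 0 < 1 + c := by positivity
    rw [← sub_lt_iff_lt_add', lt_div_iff₀ hden]
    nlinarith [h3, hω', hcω, mul_pos hD hω']
  calc 2 * R * κ = Real.log E := (Real.log_exp _).symm
    _ < Real.log (1 + κ * snr / (1 + c)) := Real.log_lt_log (Real.exp_pos _) h4
end

section
/- Let ŝ ∈ ℝⁿ have i.i.d. N(0, y) entries and let s ∈ ℝⁿ be a fixed vector with ‖s‖²/n = x, for x, y > 0. Then for any z with 0 < z ≤ x + y, P(‖ŝ - s‖²/n ≤ z) ≤ exp(-n·f(x,y,z)), where f(x,y,z) = (x+z)/(2y) - xz/(Ay) - A/(4y) - (1/2)ln(A/(2x)) with A = sqrt(y² + 4xz) - y. -/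
open MeasureTheory ProbabilityTheory
open scoped NNReal ENNReal
open Real

lemma my_integral_rexp_quadratic {b : ℝ} (hb : b < 0) (c d : ℝ) :
    ∫ u : ℝ, Real.exp (b * u ^ 2 + c * u + d)
      = Real.sqrt (π / -b) * Real.exp (d - c ^ 2 / (4 * b)) := by
  have h := integral_cexp_quadratic (b := (b : ℂ)) (by simpa using hb) (c : ℂ) (d : ℂ)
  have h1 : ∀ u : ℝ, ((b : ℂ) * u ^ 2 + c * u + d)
      = ((b * u ^ 2 + c * u + d : ℝ) : ℂ) := by intro u; push_cast; ring
  simp_rw [h1, ← Complex.ofReal_exp] at h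
  simp_rw [← Complex.coe_algebraMap, RCLike.algebraMap_eq_ofReal, integral_ofReal] at h
  simp_rw [← RCLike.algebraMap_eq_ofReal, Complex.coe_algebraMap] at h
  have h2 : ((π : ℂ) / -(b : ℂ)) ^ (1 / 2 : ℂ) = ((Real.sqrt (π / -b) : ℝ) : ℂ) := by
    rw [show ((π : ℂ) / -(b : ℂ)) = ((π / -b : ℝ) : ℂ) by push_cast; ring,
      show (1 / 2 : ℂ) = ((1 / 2 : ℝ) : ℂ) by norm_num,
      ← Complex.ofReal_cpow (div_nonneg Real.pi_pos.le (by linarith)), Real.sqrt_eq_rpow]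
  rw [h2, show ((d : ℂ) - (c : ℂ) ^ 2 / (4 * (b : ℂ))) = ((d - c ^ 2 / (4 * b) : ℝ) : ℂ) by
    push_cast; ring, ← Complex.ofReal_exp, ← Complex.ofReal_mul] at h
  exact_mod_cast h

lemma my_gaussian_exp_sq_integral {v : ℝ} (hv : 0 < v) {l : ℝ} (hl : 0 ≤ l) (c : ℝ) :
    ∫ u : ℝ, Real.exp (-(l * (u - c) ^ 2)) ∂(gaussianReal 0 v.toNNReal)
      = Real.exp (-(l * c ^ 2) / (1 + 2 * v * l)) / Real.sqrt (1 + 2 * v * l) := by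
  have hv0 : v.toNNReal ≠ 0 := by
    simp [Real.toNNReal_eq_zero]; linarith
  have hvc : ((v.toNNReal : ℝ≥0) : ℝ) = v := Real.coe_toNNReal v hv.le
  have hT : (0:ℝ) < 1 + 2 * v * l := by positivity
  rw [gaussianReal_of_var_ne_zero _ hv0]
  have hdens : gaussianPDF 0 v.toNNReal
      = fun u => ((Real.toNNReal (gaussianPDFReal 0 v.toNNReal u) : ℝ≥0) : ℝ≥0∞) := rfl
  rw [hdens, integral_withDensity_eq_integral_smul
    ((measurable_gaussianPDFReal 0 v.toNNReal).real_toNNReal)]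
  have hb : -(1 / (2 * v) + l) < 0 := by
    have : 0 < 1 / (2 * v) + l := by positivity
    linarith
  have hpt : ∀ u : ℝ, (Real.toNNReal (gaussianPDFReal 0 v.toNNReal u) : ℝ≥0)
        • Real.exp (-(l * (u - c) ^ 2))
      = (Real.sqrt (2 * π * v))⁻¹ *
        Real.exp (-(1 / (2 * v) + l) * u ^ 2 + (2 * l * c) * u + -(l * c ^ 2)) := by
    intro u
    rw [NNReal.smul_def, smul_eq_mul, Real.coe_toNNReal _ (gaussianPDFReal_nonneg _ _ _),
      gaussianPDFReal, hvc, mul_assoc, ← Real.exp_add]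
    congr 2
    field_simp
    ring
  simp_rw [hpt]
  rw [integral_const_mul, my_integral_rexp_quadratic hb]
  have hsq : Real.sqrt (π / -(-(1 / (2 * v) + l)))
      = Real.sqrt (2 * π * v) / Real.sqrt (1 + 2 * v * l) := by
    rw [← Real.sqrt_div (by positivity)]
    congr 1
    field_simp
  have hexp : -(l * c ^ 2) - (2 * l * c) ^ 2 / (4 * -(1 / (2 * v) + l))
      = -(l * c ^ 2) / (1 + 2 * v * l) := by
    have hbne : (4 : ℝ) * -(1 / (2 * v) + l) ≠ 0 := by nlinarith
    have key : (2 * l * c) ^ 2 / (4 * -(1 / (2 * v) + l))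
        = -(2 * v * l ^ 2 * c ^ 2 / (1 + 2 * v * l)) := by
      rw [div_eq_iff hbne]
      field_simp
      ring
    rw [key]
    field_simp
    ring
  rw [hsq, hexp]
  have h2 : Real.sqrt (2 * π * v) ≠ 0 := by positivity
  field_simp

theorem gaussian_covering_upper_bound
    {Ω : Type*} [MeasureSpace Ω] [IsProbabilityMeasure (ℙ : Measure Ω)]
    (n : ℕ) (hn : 1 ≤ n) (s : Fin n → ℝ) (x y z : ℝ)
    (hx : 0 < x) (hy : 0 < y) (hz : 0 < z) (hzle : z ≤ x + y)
    (hxs : (∑ i, s i ^ 2) / n = x)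
    (shat : Ω → Fin n → ℝ)
    (hind : iIndepFun (fun i ω => shat ω i) ℙ)
    (hgauss : ∀ i, Measure.map (fun ω => shat ω i) ℙ = gaussianReal 0 y.toNNReal)
    (A f : ℝ) (hA : A = Real.sqrt (y ^ 2 + 4 * x * z) - y)
    (hf : f = (x + z) / (2 * y) - x * z / (A * y) - A / (4 * y)
        - (1 / 2) * Real.log (A / (2 * x))) :
    (ℙ {ω | (∑ i, (shat ω i - s i) ^ 2) / n ≤ z}).toReal ≤ Real.exp (-(n : ℝ) * f) := by
  have hn' : (0 : ℝ) < n := by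
    have : 0 < n := hn
    exact_mod_cast this
  -- facts about A
  have hApos : 0 < A := by
    rw [hA]
    have h1 : y < Real.sqrt (y ^ 2 + 4 * x * z) :=
      (Real.lt_sqrt (by positivity)).mpr (by nlinarith)
    linarith
  have hA2x : A ≤ 2 * x := by
    rw [hA]
    have h1 : Real.sqrt (y ^ 2 + 4 * x * z) ≤ y + 2 * x := by
      rw [show y + 2 * x = Real.sqrt ((y + 2 * x) ^ 2) by rw [Real.sqrt_sq (by linarith)]]
      apply Real.sqrt_le_sqrt
      nlinarith
    linarith
  set l : ℝ := (2 * x - A) / (2 * A * y) with hl_def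
  have hl : 0 ≤ l := div_nonneg (by linarith) (by positivity)
  have hT : 1 + 2 * y * l = 2 * x / A := by
    rw [hl_def]
    field_simp
    ring
  have hTpos : (0 : ℝ) < 1 + 2 * y * l := by positivity
  -- measurable modification
  have hae_i : ∀ i, AEMeasurable (fun ω => shat ω i) ℙ := fun i =>
    aemeasurable_of_map_neZero (by rw [hgauss i]; infer_instance)
  set g : Fin n → Ω → ℝ := fun i => (hae_i i).mk _ with hg_def
  have hg_meas : ∀ i, Measurable (g i) := fun i => (hae_i i).measurable_mk
  have hg_ae : ∀ i, (fun ω => shat ω i) =ᵐ[ℙ] g i := fun i => (hae_i i).ae_eq_mk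
  have hg_law : ∀ i, Measure.map (g i) ℙ = gaussianReal 0 y.toNNReal := fun i => by
    rw [← Measure.map_congr (hg_ae i), hgauss i]
  have hae_all : ∀ᵐ ω ∂ℙ, ∀ i, shat ω i = g i ω := ae_all_iff.2 fun i => hg_ae i
  have hind' : iIndepFun g ℙ := by
    rw [iIndepFun_iff_measure_inter_preimage_eq_mul] at hind ⊢
    intro S sets hsets
    have hpre : ∀ i : Fin n,
        ((fun ω => shat ω i) ⁻¹' sets i : Set Ω) =ᵐ[ℙ] g i ⁻¹' sets i := by
      intro i
      rw [Filter.eventuallyEq_set]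
      filter_upwards [hg_ae i] with ω hω
      simp [Set.mem_preimage, hω]
    have hInt : ((⋂ i ∈ S, (fun ω => shat ω i) ⁻¹' sets i) : Set Ω)
        =ᵐ[ℙ] ⋂ i ∈ S, g i ⁻¹' sets i := by
      rw [Filter.eventuallyEq_set]
      filter_upwards [hae_all] with ω hω
      simp only [Set.mem_iInter, Set.mem_preimage]
      exact forall_congr' fun i => forall_congr' fun _ => by rw [hω i]
    rw [← measure_congr hInt, hind S hsets]
    exact Finset.prod_congr rfl fun i _ => measure_congr (hpre i)
  -- random variables
  set Y : Fin n → Ω → ℝ := fun i ω => (g i ω - s i) ^ 2 with hY_def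
  have hYmeas : ∀ i, Measurable (Y i) := fun i => ((hg_meas i).sub_const (s i)).pow_const 2
  have hYind : iIndepFun Y ℙ :=
    hind'.comp (fun i (u : ℝ) => (u - s i) ^ 2)
      (fun i => (measurable_id.sub_const (s i)).pow_const 2)
  set X : Ω → ℝ := fun ω => ∑ i, Y i ω with hX_def
  have hXmeas : Measurable X := Finset.measurable_sum _ fun i _ => hYmeas i
  have hXnonneg : ∀ ω, 0 ≤ X ω := fun ω => Finset.sum_nonneg fun i _ => sq_nonneg _
  -- event identification
  have hmeq : ℙ {ω | (∑ i, (shat ω i - s i) ^ 2) / n ≤ z} = ℙ {ω | X ω ≤ z * n} := by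
    apply measure_congr
    rw [Filter.eventuallyEq_set]
    filter_upwards [hae_all] with ω hω
    show (∑ i, (shat ω i - s i) ^ 2) / n ≤ z ↔ X ω ≤ z * n
    rw [div_le_iff₀ hn']
    have hsum : ∑ i, (shat ω i - s i) ^ 2 = X ω :=
      Finset.sum_congr rfl fun i _ => by rw [hω i]
    rw [hsum]
  -- integrability
  have hint : Integrable (fun ω => Real.exp (-l * X ω)) ℙ := by
    refine (integrable_const (1 : ℝ)).mono'
      ((hXmeas.const_mul (-l)).exp.aestronglyMeasurable) (ae_of_all _ fun ω => ?_)
    rw [Real.norm_eq_abs, abs_of_pos (Real.exp_pos _)]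
    rw [show (1 : ℝ) = Real.exp 0 by rw [Real.exp_zero]]
    apply Real.exp_le_exp.2
    have := hXnonneg ω
    nlinarith
  -- Chernoff
  have hchern := measure_le_le_exp_mul_mgf (μ := ℙ) (X := X) (t := -l) (z * n)
    (by linarith) hint
  -- mgf computation
  have hmgf_sum : mgf X ℙ (-l) = ∏ i, mgf (Y i) ℙ (-l) := by
    rw [show X = ∑ i, Y i by funext ω; rw [Finset.sum_apply]]
    exact hYind.mgf_sum hYmeas Finset.univ
  have hmgf_i : ∀ i, mgf (Y i) ℙ (-l)
      = Real.exp (-(l * s i ^ 2) / (1 + 2 * y * l)) / Real.sqrt (1 + 2 * y * l) := by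
    intro i
    have hstep : (∫ ω, Real.exp (-(l * (g i ω - s i) ^ 2)) ∂ℙ)
        = ∫ u, Real.exp (-(l * (u - s i) ^ 2)) ∂(Measure.map (g i) ℙ) :=
      (integral_map (μ := ℙ) (φ := fun ω => g i ω)
        (f := fun u : ℝ => Real.exp (-(l * (u - s i) ^ 2))) (hg_meas i).aemeasurable
        ((by fun_prop : Continuous (fun u : ℝ => Real.exp (-(l * (u - s i) ^ 2))))
          |>.aestronglyMeasurable)).symm
    simp only [mgf, hY_def, neg_mul]
    rw [hstep, hg_law i, my_gaussian_exp_sq_integral hy hl]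
  have hsum_s : ∑ i, s i ^ 2 = x * n := (div_eq_iff hn'.ne').mp hxs
  have hprod : ∏ i, (Real.exp (-(l * s i ^ 2) / (1 + 2 * y * l)) / Real.sqrt (1 + 2 * y * l))
      = Real.exp (-(l * (x * n)) / (1 + 2 * y * l)) / Real.sqrt (1 + 2 * y * l) ^ n := by
    rw [Finset.prod_div_distrib, Finset.prod_const, Finset.card_univ, Fintype.card_fin,
      ← Real.exp_sum]
    congr 2
    rw [← Finset.sum_div]
    congr 1
    rw [Finset.sum_neg_distrib, ← Finset.mul_sum, hsum_s]
  -- final computation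
  calc (ℙ {ω | (∑ i, (shat ω i - s i) ^ 2) / n ≤ z}).toReal
      = (ℙ {ω | X ω ≤ z * n}).toReal := by rw [hmeq]
    _ ≤ Real.exp (-(-l) * (z * n)) * mgf X ℙ (-l) := hchern
    _ = Real.exp (-(n : ℝ) * f) := by
        rw [hmgf_sum, Finset.prod_congr rfl fun i _ => hmgf_i i, hprod]
        rw [show Real.sqrt (1 + 2 * y * l) = Real.exp (Real.log (1 + 2 * y * l) / 2) by
          rw [← Real.log_sqrt hTpos.le, Real.exp_log (Real.sqrt_pos.2 hTpos)]]
        rw [← Real.exp_nat_mul, ← Real.exp_sub, ← Real.exp_add]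
        congr 1
        have hlog1 : Real.log (1 + 2 * y * l) = Real.log (2 * x) - Real.log A := by
          rw [hT, Real.log_div (by positivity) hApos.ne']
        have hlog2 : Real.log (A / (2 * x)) = Real.log A - Real.log (2 * x) :=
          Real.log_div hApos.ne' (by positivity)
        rw [hf, hlog1, hlog2, hT, hl_def]
        field_simp
        ring
end
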